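/- arXiv:1708.02468 — 6 statements merged into one kernel-verified Lean document; each statement's English description precedes it below -/
import Mathlib

section
/- Let G be a topological group acting continuously on a compact Hausdorff space X such that the action is minimal and proximal. Then the only endomorphism of this flow (continuous G-equivariant map from X to itself) is the identity map. -/
/-- A flow is minimal if every orbit is dense. -/
def IsMinimalFlow (G X : Type*) [Group G] [TopologicalSpace X] [MulAction G X] : Prop :=
  ∀ x : X, Dense (Set.range fun g : G => g • x)

/-- A flow is proximal if every pair of points can be pushed together:
there is a net `t_n` with `lim t_n x = lim t_n y`, equivalently some `(z,z)` lies in the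
closure of the orbit of `(x,y)` under the diagonal action. -/
def IsProximalFlow (G X : Type*) [Group G] [TopologicalSpace X] [MulAction G X] : Prop :=
  ∀ x y : X, ∃ z : X, (z, z) ∈ closure (Set.range fun g : G => (g • x, g • y))

/-!
The graph of an endomorphism `h` is closed and invariant, so it contains the orbit closure of
`(x, h x)`; proximality puts a diagonal point `(z, z)` there, making `z` a fixed point of `h`.
The fixed points of `h` form a closed invariant set containing the dense orbit of `z`.
-/

open Set

section Endomorphism

variable {G X : Type*} [SMul G X] [TopologicalSpace X] [T2Space X] {h : X → X}

theorem apply_eq_of_mem_closure_range_smul_pair (hc : Continuous h)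
    (heq : ∀ (t : G) (x : X), h (t • x) = t • h x) {x z w : X}
    (hzw : (z, w) ∈ closure (range fun g : G => (g • x, g • h x))) : h z = w := by
  have hgraph : IsClosed {p : X × X | h p.1 = p.2} :=
    isClosed_eq (hc.comp continuous_fst) continuous_snd
  have horbit : (range fun g : G => (g • x, g • h x)) ⊆ {p : X × X | h p.1 = p.2} := by
    rintro _ ⟨g, rfl⟩
    exact heq g x
  exact closure_minimal horbit hgraph hzw

theorem eq_id_of_apply_eq_self_of_dense_range_smul (hc : Continuous h)
    (heq : ∀ (t : G) (x : X), h (t • x) = t • h x) {z : X} (hz : h z = z)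
    (hdense : Dense (range fun g : G => g • z)) : h = id :=
  hc.ext_on hdense continuous_id <| by
    rintro _ ⟨g, rfl⟩
    simp [heq, hz]

end Endomorphism

theorem endomorphism_of_minimal_proximal_is_id_general
    (G X : Type*) [Group G]
    [TopologicalSpace X] [T2Space X]
    [MulAction G X]
    (hmin : IsMinimalFlow G X) (hprox : IsProximalFlow G X)
    (h : X → X) (hc : Continuous h) (heq : ∀ (t : G) (x : X), h (t • x) = t • h x) :
    h = id := by
  funext x
  obtain ⟨z, hz⟩ := hprox x (h x)
  exact congrFun (eq_id_of_apply_eq_self_of_dense_range_smul hc heq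
    (apply_eq_of_mem_closure_range_smul_pair hc heq hz) (hmin z)) x

theorem endomorphism_of_minimal_proximal_is_id
    (G X : Type*) [Group G] [TopologicalSpace G] [IsTopologicalGroup G]
    [TopologicalSpace X] [CompactSpace X] [T2Space X]
    [MulAction G X] [ContinuousSMul G X]
    (hmin : IsMinimalFlow G X) (hprox : IsProximalFlow G X)
    (h : X → X) (hc : Continuous h) (heq : ∀ (t : G) (x : X), h (t • x) = t • h x) :
    h = id :=
  endomorphism_of_minimal_proximal_is_id_general G X hmin hprox h hc heq
end

section
/- Let T be a topological group acting continuously, minimally and proximally on a compact Hausdorff space X, and let L be a closed subgroup of finite index in T. Then the restricted action of L on X is also minimal and proximal. -/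
/-!
Proximality passes to a finite-index subgroup `L`: the `T`-orbit of `(x, y)` is covered by
finitely many translates of its `L`-orbit, so a diagonal point in the closure of the former lies
in a translate of the closure of the latter.

For minimality it suffices to treat the normal core `K` of `L`, a normal subgroup that is proximal
by the first part. Take a minimal closed `K`-invariant set `M` (Zorn). Its translates `t • M` are
again minimal for `K`, and two minimal sets of a proximal flow meet, hence coincide. So `M` is
`T`-invariant, hence all of `X`, i.e. the `K`-flow is minimal.
-/

open Set MulAction Pointwise

instance Subgroup.continuousConstSMul {T X : Type*} [Group T] [TopologicalSpace X]
    [MulAction T X] [ContinuousConstSMul T X] (K : Subgroup T) : ContinuousConstSMul K X :=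
  ⟨fun k => continuous_const_smul (k : T)⟩

theorem isMinimalFlow_iff_isMinimal {G X : Type*} [Group G] [TopologicalSpace X]
    [MulAction G X] : IsMinimalFlow G X ↔ IsMinimal G X :=
  ⟨fun h => ⟨h⟩, fun h => h.dense_orbit⟩

theorem IsMinimalFlow.mono {T X : Type*} [Group T] [TopologicalSpace X] [MulAction T X]
    {H K : Subgroup T} (hHK : H ≤ K) (h : IsMinimalFlow H X) : IsMinimalFlow K X :=
  fun x => (h x).mono <| by
    rintro _ ⟨k, rfl⟩
    exact ⟨⟨k, hHK k.2⟩, rfl⟩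

theorem exists_smul_mem_closure_orbit_of_finiteIndex {G Y : Type*} [Group G]
    [TopologicalSpace Y] [MulAction G Y] [ContinuousConstSMul G Y] (H : Subgroup G)
    [H.FiniteIndex] {a p : Y} (hp : p ∈ closure (orbit G a)) :
    ∃ g : G, g • p ∈ closure (orbit H a) := by
  have hcover : orbit G a ⊆ ⋃ q : G ⧸ H, q.out • orbit H a := by
    rintro _ ⟨g, rfl⟩
    obtain ⟨h, hh⟩ := QuotientGroup.mk_out_eq_mul H g
    refine mem_iUnion.2 ⟨g, h⁻¹ • a, ⟨h⁻¹, rfl⟩, ?_⟩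
    simp [hh, Subgroup.smul_def, smul_smul]
  have hp' := closure_mono hcover hp
  rw [closure_iUnion_of_finite] at hp'
  obtain ⟨q, hq⟩ := mem_iUnion.1 hp'
  rw [closure_smul, mem_smul_set_iff_inv_smul_mem] at hq
  exact ⟨_, hq⟩

theorem IsProximalFlow.subgroup_of_finiteIndex {G X : Type*} [Group G] [TopologicalSpace X]
    [MulAction G X] [ContinuousConstSMul G X] (hprox : IsProximalFlow G X) (H : Subgroup G)
    [H.FiniteIndex] : IsProximalFlow H X := by
  intro x y
  obtain ⟨z, hz⟩ := hprox x y
  obtain ⟨g, hg⟩ := exists_smul_mem_closure_orbit_of_finiteIndex H (a := (x, y)) hz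
  exact ⟨g • z, hg⟩

section Subflow

variable {G X : Type*} [Group G] [TopologicalSpace X] [MulAction G X]

variable (G) in
def IsSubflow (A : Set X) : Prop :=
  A.Nonempty ∧ IsClosed A ∧ ∀ g : G, g • A ⊆ A

variable (G) in
def IsMinimalSubflow (M : Set X) : Prop :=
  Minimal (IsSubflow G) M

theorem exists_isMinimalSubflow [CompactSpace X] [Nonempty X] :
    ∃ M : Set X, IsMinimalSubflow G M := by
  refine (zorn_superset_nonempty {A : Set X | IsSubflow G A} ?_ univ
    ⟨univ_nonempty, isClosed_univ, fun _ => subset_univ _⟩).imp fun M hM => hM.2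
  intro c hc hchain hne
  refine ⟨⋂₀ c, ⟨?_, isClosed_sInter fun A hA => (hc hA).2.1, fun g => ?_⟩,
    fun A => sInter_subset_of_mem⟩
  · have : Nonempty c := hne.to_subtype
    exact IsCompact.nonempty_sInter_of_directed_nonempty_isCompact_isClosed
      (IsChain.directedOn (r := fun A B : Set X => A ⊇ B) hchain.symm)
      (fun A hA => (hc hA).1) (fun A hA => (hc hA).2.1.isCompact) fun A hA => (hc hA).2.1
  · rintro _ ⟨x, hx, rfl⟩
    exact mem_sInter.2 fun A hA => (hc hA).2.2 g (smul_mem_smul_set (mem_sInter.1 hx A hA))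

theorem IsMinimalSubflow.eq_of_isProximalFlow (hprox : IsProximalFlow G X) {A B : Set X}
    (hA : IsMinimalSubflow G A) (hB : IsMinimalSubflow G B) : A = B := by
  obtain ⟨⟨a, ha⟩, hAc, hAinv⟩ := hA.prop
  obtain ⟨⟨b, hb⟩, hBc, hBinv⟩ := hB.prop
  obtain ⟨z, hz⟩ := hprox a b
  have hzAB : (z, z) ∈ A ×ˢ B := closure_minimal (by
    rintro _ ⟨g, rfl⟩
    exact ⟨hAinv g (smul_mem_smul_set ha), hBinv g (smul_mem_smul_set hb)⟩) (hAc.prod hBc) hz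
  have hAB : IsSubflow G (A ∩ B) := ⟨⟨z, hzAB⟩, hAc.inter hBc,
    fun g => smul_set_inter_subset.trans (inter_subset_inter (hAinv g) (hBinv g))⟩
  exact (hA.eq_of_le hAB inter_subset_left).symm.trans (hB.eq_of_le hAB inter_subset_right)

theorem IsSubflow.eq_univ (hmin : IsMinimalFlow G X) {A : Set X} (hA : IsSubflow G A) :
    A = univ :=
  have := isMinimalFlow_iff_isMinimal.1 hmin
  (eq_empty_or_univ_of_smul_invariant_closed G hA.2.1 hA.2.2).resolve_left hA.1.ne_empty

theorem IsMinimalSubflow.isMinimalFlow_of_eq_univ [ContinuousConstSMul G X] {M : Set X}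
    (hM : IsMinimalSubflow G M) (huniv : M = univ) : IsMinimalFlow G X := by
  rw [isMinimalFlow_iff_isMinimal, isMinimal_iff_isClosed_smul_invariant]
  intro s hs hinv
  refine s.eq_empty_or_nonempty.imp_right fun hne => ?_
  exact (hM.eq_of_le ⟨hne, hs, hinv⟩ (huniv ▸ subset_univ s)).trans huniv

end Subflow

section Normal

variable {T X : Type*} [Group T] [TopologicalSpace X] [MulAction T X] [ContinuousConstSMul T X]
  {K : Subgroup T} [K.Normal]

theorem IsSubflow.smul_of_normal {A : Set X} (hA : IsSubflow K A) (t : T) :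
    IsSubflow K (t • A) := by
  obtain ⟨hne, hclosed, hinv⟩ := hA
  refine ⟨hne.smul_set, hclosed.smul t, fun k => ?_⟩
  rintro _ ⟨_, ⟨a, ha, rfl⟩, rfl⟩
  have hconj : t⁻¹ * k * t ∈ K := by simpa using ‹K.Normal›.conj_mem k k.2 t⁻¹
  refine ⟨(t⁻¹ * k * t) • a, hinv ⟨_, hconj⟩ (smul_mem_smul_set ha), ?_⟩
  simp [Subgroup.smul_def, smul_smul, mul_assoc]

theorem IsMinimalSubflow.smul_of_normal {M : Set X} (hM : IsMinimalSubflow K M) (t : T) :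
    IsMinimalSubflow K (t • M) := by
  refine ⟨hM.prop.smul_of_normal t, fun B hB hBM => ?_⟩
  rw [smul_set_subset_iff_subset_inv_smul_set]
  exact hM.2 (hB.smul_of_normal t⁻¹) (subset_smul_set_iff.1 hBM)

theorem IsMinimalFlow.of_normal_of_isProximalFlow [CompactSpace X] (hmin : IsMinimalFlow T X)
    (hprox : IsProximalFlow K X) : IsMinimalFlow K X := by
  cases isEmpty_or_nonempty X with
  | inl _ => exact fun x => isEmptyElim x
  | inr _ =>
    obtain ⟨M, hM⟩ := exists_isMinimalSubflow (G := K) (X := X)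
    have hMT : IsSubflow T M := ⟨hM.prop.1, hM.prop.2.1,
      fun t => ((hM.smul_of_normal t).eq_of_isProximalFlow hprox hM).le⟩
    exact hM.isMinimalFlow_of_eq_univ (hMT.eq_univ hmin)

end Normal

theorem restriction_to_finiteIndex_closed_subgroup_minimal_proximal_general
    (T X : Type*) [Group T] [TopologicalSpace T]
    [TopologicalSpace X] [CompactSpace X]
    [MulAction T X] [ContinuousSMul T X]
    (hmin : IsMinimalFlow T X) (hprox : IsProximalFlow T X)
    (L : Subgroup T) [L.FiniteIndex] :
    IsMinimalFlow L X ∧ IsProximalFlow L X :=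
  ⟨(hmin.of_normal_of_isProximalFlow (hprox.subgroup_of_finiteIndex L.normalCore)).mono
    L.normalCore_le, hprox.subgroup_of_finiteIndex L⟩

theorem restriction_to_finiteIndex_closed_subgroup_minimal_proximal
    (T X : Type*) [Group T] [TopologicalSpace T] [IsTopologicalGroup T]
    [TopologicalSpace X] [CompactSpace X] [T2Space X]
    [MulAction T X] [ContinuousSMul T X]
    (hmin : IsMinimalFlow T X) (hprox : IsProximalFlow T X)
    (L : Subgroup T) (hL : IsClosed (L : Set T)) [L.FiniteIndex] :
    IsMinimalFlow L X ∧ IsProximalFlow L X :=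
  restriction_to_finiteIndex_closed_subgroup_minimal_proximal_general T X hmin hprox L
end

section
/- Let (G, X) be a minimal flow that is universal among minimal G-flows (every minimal G-flow is a factor of it) and coalescent (every endomorphism of (G,X) is an automorphism). Suppose G is not extremely amenable (X is not a singleton). If t ∈ G is such that the closed subgroup generated by {a(t) : a ∈ Aut(G)} equals G, then the action of t on X is not the identity map. -/
universe u v

/-- A topological (bicontinuous) automorphism of a topological group. -/
def IsTopAut {G : Type*} [Group G] [TopologicalSpace G] (a : G ≃* G) : Prop :=
  Continuous a ∧ Continuous a.symm

/-- The `Aut(G)`-orbit of an element `t`. -/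
def autOrbit (G : Type*) [Group G] [TopologicalSpace G] (t : G) : Set G :=
  {g : G | ∃ a : G ≃* G, IsTopAut a ∧ a t = g}

/-!
If `t` acts trivially on `X`, then for every topological automorphism `a` the factor map
`f : X → X` from universality onto the twisted flow `g • x := a g • x` gives
`a t • f x = f (t • x) = f x`, so by surjectivity of `f` the element `a t` acts trivially too.
The elements acting trivially form a closed subgroup, which therefore contains the closed subgroup
generated by the `Aut(G)`-orbit of `t`, i.e. all of `G`. A minimal flow on which `G` acts
trivially is a single point.
-/

open Set Function

theorem IsMinimalFlow.compHom {G H X : Type*} [Group G] [Group H] [TopologicalSpace X]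
    [MulAction G X] (h : IsMinimalFlow G X) {f : H →* G} (hf : Surjective f) :
    letI := MulAction.compHom X f
    IsMinimalFlow H X := fun x => by
  simpa only [MulAction.compHom_smul_def] using hf.range_comp (fun g : G => g • x) ▸ h x

theorem isClosed_fixingSubgroup (G X : Type*) [Group G] [TopologicalSpace G]
    [TopologicalSpace X] [T1Space X] [MulAction G X] [ContinuousSMul G X] (s : Set X) :
    IsClosed (fixingSubgroup G s : Set G) := by
  have hs : (fixingSubgroup G s : Set G) = ⋂ x ∈ s, (fun g : G => g • x) ⁻¹' {x} := by
    ext g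
    simp [mem_fixingSubgroup_iff]
  rw [hs]
  exact isClosed_biInter fun x _ =>
    isClosed_singleton.preimage (continuous_id.smul continuous_const)

theorem map_mem_fixingSubgroup_univ_of_surjective {G X : Type*} [Group G] [MulAction G X]
    {a : G →* G} {f : X → X} (hf : Surjective f) (hfa : ∀ (g : G) (x : X), f (g • x) = a g • f x)
    {t : G} (ht : t ∈ fixingSubgroup G (univ : Set X)) :
    a t ∈ fixingSubgroup G (univ : Set X) := by
  rw [mem_fixingSubgroup_iff] at ht ⊢
  intro y _
  obtain ⟨x, rfl⟩ := hf y
  rw [← hfa, ht x (mem_univ x)]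

theorem IsMinimalFlow.subsingleton_of_fixingSubgroup_eq_top {G X : Type*} [Group G]
    [TopologicalSpace X] [T1Space X] [MulAction G X] (h : IsMinimalFlow G X)
    (htop : fixingSubgroup G (univ : Set X) = ⊤) : Subsingleton X := by
  refine ⟨fun x y => ?_⟩
  have horbit : (range fun g : G => g • x) = {x} := by
    refine eq_singleton_iff_unique_mem.2 ⟨⟨1, one_smul G x⟩, ?_⟩
    rintro _ ⟨g, rfl⟩
    exact (mem_fixingSubgroup_iff G).1 (htop ▸ Subgroup.mem_top g) x (mem_univ x)
  have hy : y ∈ closure {x} := (horbit ▸ h x) y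
  rw [closure_singleton] at hy
  exact hy.symm

theorem universal_minimal_coalescent_effective_general
    (G : Type u) (X : Type v) [Group G] [TopologicalSpace G] [IsTopologicalGroup G]
    [TopologicalSpace X] [CompactSpace X] [T2Space X]
    [MulAction G X] [ContinuousSMul G X]
    (hmin : IsMinimalFlow G X)
    -- universality: every minimal G-flow is a factor of (G, X)
    (huniv : ∀ (Y : Type v) [TopologicalSpace Y] [CompactSpace Y] [T2Space Y]
      [MulAction G Y] [ContinuousSMul G Y], IsMinimalFlow G Y →
      ∃ f : X → Y, Continuous f ∧ Function.Surjective f ∧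
        ∀ (g : G) (x : X), f (g • x) = g • f x)
    -- G is not extremely amenable: X is not a singleton
    (hnontriv : ∃ x y : X, x ≠ y)
    (t : G)
    (ht : (Subgroup.closure (autOrbit G t)).topologicalClosure = ⊤) :
    ∃ x : X, t • x ≠ x := by
  by_contra! htriv
  have ht_fix : t ∈ fixingSubgroup G (univ : Set X) :=
    (mem_fixingSubgroup_iff G).2 fun x _ => htriv x
  have horbit : autOrbit G t ⊆ fixingSubgroup G (univ : Set X) := by
    rintro _ ⟨a, ⟨ha, -⟩, rfl⟩
    obtain ⟨f, -, hf, hfa⟩ := @huniv X _ _ _ (MulAction.compHom X (a : G →* G))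
      (MulAction.continuousSMul_compHom ha) (hmin.compHom a.surjective)
    exact map_mem_fixingSubgroup_univ_of_surjective (a := a) hf hfa ht_fix
  have htop : fixingSubgroup G (univ : Set X) = ⊤ :=
    top_le_iff.1 <| ht ▸ Subgroup.topologicalClosure_minimal _
      ((Subgroup.closure_le _).2 horbit) (isClosed_fixingSubgroup G X univ)
  obtain ⟨x, y, hxy⟩ := hnontriv
  exact hxy ((hmin.subsingleton_of_fixingSubgroup_eq_top htop).elim x y)

theorem universal_minimal_coalescent_effective
    (G : Type u) (X : Type v) [Group G] [TopologicalSpace G] [IsTopologicalGroup G]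
    [TopologicalSpace X] [CompactSpace X] [T2Space X]
    [MulAction G X] [ContinuousSMul G X]
    (hmin : IsMinimalFlow G X)
    -- universality: every minimal G-flow is a factor of (G, X)
    (huniv : ∀ (Y : Type v) [TopologicalSpace Y] [CompactSpace Y] [T2Space Y]
      [MulAction G Y] [ContinuousSMul G Y], IsMinimalFlow G Y →
      ∃ f : X → Y, Continuous f ∧ Function.Surjective f ∧
        ∀ (g : G) (x : X), f (g • x) = g • f x)
    -- coalescence: every endomorphism of (G, X) is an automorphism
    (hcoal : ∀ f : X → X, Continuous f → (∀ (g : G) (x : X), f (g • x) = g • f x) →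
      Function.Bijective f)
    -- G is not extremely amenable: X is not a singleton
    (hnontriv : ∃ x y : X, x ≠ y)
    (t : G)
    (ht : (Subgroup.closure (autOrbit G t)).topologicalClosure = ⊤) :
    ∃ x : X, t • x ≠ x :=
  universal_minimal_coalescent_effective_general G X hmin huniv hnontriv t ht
end

section
/- Let (G, X) be a universal minimal coalescent flow for a topological group G, and suppose for every t ≠ e the set {a(t) : a ∈ Aut(G)} is dense in G ∖ {e}. If there exists τ ∈ G such that τ x ≠ x for all x ∈ X (the action is free at τ), then the action is free at every t ≠ e, i.e., (G,X) is a free flow. -/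
universe u v

/-!
The set of elements of `G` that fix some point of `X` is closed (it is the projection to `G`
of the closed set `{(x, g) | g • x = x}`, and `X` is compact) and invariant under every
automorphism of `G` that lifts to `X`. If some `t ≠ e` fixed a point, this set would contain
the closure of the `Aut(G)`-orbit of `t`, hence all of `G ∖ {e}`, including `τ`.
-/

theorem isClosed_setOf_exists_smul_eq_self (G X : Type*) [TopologicalSpace G]
    [TopologicalSpace X] [CompactSpace X] [T2Space X] [SMul G X] [ContinuousSMul G X] :
    IsClosed {g : G | ∃ x : X, g • x = x} := by
  have hgraph : IsClosed {p : X × G | p.2 • p.1 = p.1} :=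
    isClosed_eq (continuous_snd.smul continuous_fst) continuous_fst
  convert isClosedMap_snd_of_compactSpace _ hgraph using 1
  ext g
  simp

theorem smul_eq_self_of_semiconj {G X : Type*} [SMul G X] {a : G → G} {h : X → X}
    (hh : ∀ (s : G) (x : X), h (s • x) = a s • h x) {t : G} {x : X} (hx : t • x = x) :
    a t • h x = h x := by
  rw [← hh, hx]

theorem universal_minimal_free_at_one_point_implies_free_general
    (G : Type u) (X : Type v) [Group G] [TopologicalSpace G]
    [TopologicalSpace X] [CompactSpace X] [T2Space X]
    [MulAction G X] [ContinuousSMul G X]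
    -- each topological automorphism of G induces a homeomorphism of X
    (hat : ∀ a : G ≃* G, IsTopAut a →
      ∃ h : X ≃ₜ X, ∀ (s : G) (x : X), h (s • x) = a s • h x)
    -- the Aut(G)-orbit of every nonidentity element is dense in G \ {e}
    (hdense : ∀ t : G, t ≠ 1 → {g : G | g ≠ 1} ⊆ closure (autOrbit G t))
    -- the action is free at some τ
    (hτ : ∃ τ : G, ∀ x : X, τ • x ≠ x) :
    ∀ t : G, t ≠ 1 → ∀ x : X, t • x ≠ x := by
  intro t ht x hx
  obtain ⟨τ, hτ⟩ := hτ
  have hτ_ne_one : τ ≠ 1 := fun h => hτ x (by rw [h, one_smul])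
  have horbit : autOrbit G t ⊆ {g : G | ∃ y : X, g • y = y} := by
    rintro _ ⟨a, ha, rfl⟩
    obtain ⟨h, hh⟩ := hat a ha
    exact ⟨h x, smul_eq_self_of_semiconj hh hx⟩
  obtain ⟨y, hy⟩ := (isClosed_setOf_exists_smul_eq_self G X).closure_subset_iff.mpr horbit
    (hdense t ht hτ_ne_one)
  exact hτ y hy

theorem universal_minimal_free_at_one_point_implies_free
    (G : Type u) (X : Type v) [Group G] [TopologicalSpace G] [IsTopologicalGroup G]
    [TopologicalSpace X] [CompactSpace X] [T2Space X]
    [MulAction G X] [ContinuousSMul G X]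
    (hmin : IsMinimalFlow G X)
    -- universality: every minimal G-flow is a factor of (G, X)
    (huniv : ∀ (Y : Type v) [TopologicalSpace Y] [CompactSpace Y] [T2Space Y]
      [MulAction G Y] [ContinuousSMul G Y], IsMinimalFlow G Y →
      ∃ f : X → Y, Continuous f ∧ Function.Surjective f ∧
        ∀ (g : G) (x : X), f (g • x) = g • f x)
    -- coalescence
    (hcoal : ∀ f : X → X, Continuous f → (∀ (g : G) (x : X), f (g • x) = g • f x) →
      Function.Bijective f)
    -- each topological automorphism of G induces a homeomorphism of X
    (hat : ∀ a : G ≃* G, IsTopAut a →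
      ∃ h : X ≃ₜ X, ∀ (s : G) (x : X), h (s • x) = a s • h x)
    -- the Aut(G)-orbit of every nonidentity element is dense in G \ {e}
    (hdense : ∀ t : G, t ≠ 1 → {g : G | g ≠ 1} ⊆ closure (autOrbit G t))
    -- the action is free at some τ
    (hτ : ∃ τ : G, ∀ x : X, τ • x ≠ x) :
    ∀ t : G, t ≠ 1 → ∀ x : X, t • x ≠ x :=
  universal_minimal_free_at_one_point_implies_free_general G X hat hdense hτ
end

section
/- Let T be a topological monoid and H a submonoid of T. If the universal minimal semiflow (T, M(T)) is free (for every t ≠ e and every x, tx ≠ x), then the universal minimal semiflow (H, M(H)) of H is also free. -/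
universe u v

structure Semiflow (T : Type u) [Monoid T] [TopologicalSpace T] : Type (max u (v + 1)) where
  X : Type v
  [ts : TopologicalSpace X]
  [cs : CompactSpace X]
  [t2 : T2Space X]
  [ma : MulAction T X]
  [csm : ContinuousSMul T X]

attribute [instance] Semiflow.ts Semiflow.cs Semiflow.t2 Semiflow.ma Semiflow.csm

variable {T : Type u} [Monoid T] [TopologicalSpace T]

def Semiflow.IsMinimal (F : Semiflow.{u, v} T) : Prop :=
  Nonempty F.X ∧ ∀ A : Set F.X, A.Nonempty → IsClosed A →
    (∀ (t : T), ∀ x ∈ A, t • x ∈ A) → A = Set.univ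

def Semiflow.Factor (F E : Semiflow.{u, v} T) : Prop :=
  ∃ f : F.X → E.X, Continuous f ∧ Function.Surjective f ∧
    ∀ (t : T) (x : F.X), f (t • x) = t • f x

/-- A semiflow is free if no element other than the identity fixes any point. -/
def Semiflow.IsFree (F : Semiflow.{u, v} T) : Prop :=
  ∀ t : T, t ≠ 1 → ∀ x : F.X, t • x ≠ x

theorem free_universal_minimal_semiflow_of_submonoid
    [ContinuousMul T] (H : Submonoid T)
    (MT : Semiflow.{u, v} T) (hTmin : MT.IsMinimal)
    (hTuniv : ∀ F : Semiflow.{u, v} T, F.IsMinimal → MT.Factor F)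
    (hTfree : MT.IsFree)
    (MH : Semiflow.{u, v} H) (hHmin : MH.IsMinimal)
    (hHuniv : ∀ F : Semiflow.{u, v} H, F.IsMinimal → MH.Factor F) :
    MH.IsFree := by
  classical
  -- Find an H-minimal closed invariant subset A of MT.X via Zorn's lemma.
  set S : Set (Set MT.X) :=
    {A | A.Nonempty ∧ IsClosed A ∧ ∀ h : H, ∀ x ∈ A, (h : T) • x ∈ A} with hS
  obtain ⟨A, -, hAS, hAmin⟩ := zorn_superset_nonempty S
    (fun c hcS hc hcne => by
      refine ⟨⋂₀ c, ⟨?_, ?_, ?_⟩, fun s hs => Set.sInter_subset_of_mem hs⟩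
      · haveI : Nonempty c := hcne.to_subtype
        exact IsCompact.nonempty_sInter_of_directed_nonempty_isCompact_isClosed
          (fun a ha b hb => (hc.total ha hb).elim (fun h => ⟨a, ha, subset_rfl, h⟩) (fun h => ⟨b, hb, h, subset_rfl⟩))
          (fun U hU => (hcS hU).1)
          (fun U hU => (hcS hU).2.1.isCompact)
          (fun U hU => (hcS hU).2.1)
      · exact isClosed_sInter (fun U hU => (hcS hU).2.1)
      · intro h x hx
        exact Set.mem_sInter.2 fun U hU => (hcS hU).2.2 h x (Set.mem_sInter.1 hx U hU))
    Set.univ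
    ⟨(by haveI := hTmin.1; exact Set.univ_nonempty), isClosed_univ, fun _ _ _ => Set.mem_univ _⟩
  obtain ⟨hAne, hAcl, hAinv⟩ := hAS
  -- Build the H-semiflow on A.
  haveI : CompactSpace A := isCompact_iff_compactSpace.1 hAcl.isCompact
  letI ma : MulAction H A :=
    { smul := fun h x => ⟨(h : T) • (x : MT.X), hAinv h x x.2⟩
      one_smul := fun x => Subtype.ext (show ((1 : H) : T) • (x : MT.X) = (x : MT.X) by simp)
      mul_smul := fun g h x => Subtype.ext (show ((g * h : H) : T) • (x : MT.X) = (g : T) • ((h : T) • (x : MT.X)) by rw [Submonoid.coe_mul, mul_smul]) }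
  have smul_def : ∀ (h : H) (x : A), ((h • x : A) : MT.X) = (h : T) • (x : MT.X) :=
    fun _ _ => rfl
  haveI csm : ContinuousSMul H A :=
    ⟨by
      apply Continuous.subtype_mk
      exact (continuous_smul.comp
        ((continuous_subtype_val.comp continuous_fst).prodMk
          (continuous_subtype_val.comp continuous_snd)))⟩
  let F : Semiflow.{u, v} H := { X := A }
  -- F is minimal.
  have hFmin : F.IsMinimal := by
    constructor
    · exact Set.Nonempty.to_subtype hAne
    · intro B hBne hBcl hBinv
      have himg : (Subtype.val '' B : Set MT.X) ∈ S := by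
        refine ⟨hBne.image _, ?_, ?_⟩
        · exact (hBcl.isCompact.image continuous_subtype_val).isClosed
        · rintro h x ⟨y, hy, rfl⟩
          exact ⟨h • y, hBinv h y hy, rfl⟩
      have hsub : (Subtype.val '' B : Set MT.X) ⊆ A := by
        rintro x ⟨y, -, rfl⟩; exact y.2
      have : (Subtype.val '' B : Set MT.X) = A := le_antisymm hsub (hAmin himg hsub)
      ext x
      simp only [Set.mem_univ, iff_true]
      have hx : (x : MT.X) ∈ Subtype.val '' B := this.symm ▸ x.2
      obtain ⟨y, hy, hxy⟩ := hx
      rwa [show y = x from Subtype.ext hxy] at hy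
  -- F is free, since MT is free and h ≠ 1 in H implies (h : T) ≠ 1.
  have hFfree : F.IsFree := by
    intro h hne x hx
    have : (h : T) ≠ 1 := fun hc => hne (Subtype.ext hc)
    exact hTfree (h : T) this (x : MT.X) (congrArg Subtype.val hx)
  -- MH factors onto F, and freeness of a factor implies freeness.
  obtain ⟨f, -, -, hfeq⟩ := hHuniv F hFmin
  intro h hne x hx
  exact hFfree h hne (f x) (by rw [← hfeq, hx])
end

section
/- Let G be a topological group, N a normal clopen subgroup of G, and suppose each inner automorphism σ_t of G restricts to an automorphism of N inducing a homeomorphism \widehat{σ_t|_N} of Π(N) (via the universal property of Π(N)), such that for r ∈ N, \widehat{σ_r|_N}(z) = rz, and t ↦ \widehat{σ_t|_N} is a homomorphism. Then the map ζ : G × Π(N) → Π(N), ζ(t,z) = \widehat{σ_t|_N}(z), is jointly continuous; hence (G, Π(N), ζ) is a flow, and this flow is minimal and proximal. -/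
universe u v

/-!
Since `N` is open, every `t ∈ G` has the neighbourhood `tN`, on which
`ζ(s, z) = ζ(t, (t⁻¹s) • z)` by the homomorphism property; this expresses `ζ` near `(t, z)`
through the jointly continuous `N`-action. Minimality and proximality pass from `N` to `G`
because `ζ` extends the `N`-action, so the `G`-orbits contain the `N`-orbits.
-/

open Set Topology

section ExtendedAction

variable {G X : Type*} [Group G] [TopologicalSpace X] (N : Subgroup G) [MulAction N X]

theorem continuous_uncurry_of_apply_mul_eq_apply_smul [TopologicalSpace G] [ContinuousMul G]
    (hN : IsOpen (N : Set G)) [ContinuousSMul N X] (F : G → X → X)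
    (hF : ∀ t, Continuous (F t))
    (h : ∀ (t : G) (r : N) (x : X), F (t * r) x = F t (r • x)) :
    Continuous fun p : G × X => F p.1 p.2 := by
  rw [continuous_iff_continuousAt]
  rintro ⟨t, z⟩
  set U : Set (G × X) := {p | t⁻¹ * p.1 ∈ N}
  have hU : U ∈ 𝓝 (t, z) :=
    (hN.preimage (continuous_const.mul continuous_fst)).mem_nhds (by simp [N.one_mem])
  refine ContinuousOn.continuousAt ?_ hU
  rw [continuousOn_iff_continuous_domRestrict]
  have hcont : Continuous fun p : U => F t ((⟨t⁻¹ * p.1.1, p.2⟩ : N) • p.1.2) := by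
    fun_prop
  refine hcont.congr fun ⟨⟨s, x⟩, hs⟩ => ?_
  simp only [← h, mul_inv_cancel_left, Set.domRestrict_apply]

theorem dense_range_apply_of_apply_coe_eq_smul (hmin : IsMinimalFlow N X) (F : G → X → X)
    (hF : ∀ (r : N) (x : X), F r x = r • x) (x : X) : Dense (range fun t : G => F t x) :=
  (hmin x).mono <| by
    rintro _ ⟨r, rfl⟩
    exact ⟨r, hF r x⟩

theorem exists_diag_mem_closure_range_apply_of_apply_coe_eq_smul (hprox : IsProximalFlow N X)
    (F : G → X → X) (hF : ∀ (r : N) (x : X), F r x = r • x) (x y : X) :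
    ∃ z : X, (z, z) ∈ closure (range fun t : G => (F t x, F t y)) := by
  obtain ⟨z, hz⟩ := hprox x y
  refine ⟨z, closure_mono ?_ hz⟩
  rintro _ ⟨r, rfl⟩
  exact ⟨r, by simp only [hF]⟩

end ExtendedAction

theorem extended_action_continuous_minimal_proximal_general
    (G : Type u) (X : Type v) [Group G] [TopologicalSpace G] [IsTopologicalGroup G]
    (N : Subgroup G) (hNo : IsOpen (N : Set G))
    -- X = Π(N) : the universal minimal proximal flow of N, with jointly continuous N-action
    [TopologicalSpace X]
    [MulAction N X] [ContinuousSMul N X]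
    (hmin : IsMinimalFlow N X) (hprox : IsProximalFlow N X)
    -- the assignment t ↦ σ̂_{t|N} of homeomorphisms of Π(N) to elements of G
    (F : G → X ≃ₜ X)
    -- t ↦ σ̂_{t|N} is a homomorphism
    (F_hom : ∀ s t : G, F (s * t) = (F t).trans (F s))
    -- for r ∈ N, σ̂_{r|N} is the action of r
    (F_mem : ∀ (r : N) (z : X), F (r : G) z = r • z) :
    -- ζ is jointly continuous, and the resulting G-flow is minimal and proximal
    Continuous (fun p : G × X => F p.1 p.2) ∧
    (∀ z : X, Dense (Set.range fun t : G => F t z)) ∧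
    (∀ z w : X, ∃ y : X, (y, y) ∈ closure (Set.range fun t : G => (F t z, F t w))) := by
  have F_mul_coe : ∀ (t : G) (r : N) (x : X), F (t * r) x = F t (r • x) := fun t r x => by
    rw [F_hom, Homeomorph.trans_apply, F_mem]
  exact ⟨continuous_uncurry_of_apply_mul_eq_apply_smul N hNo _ (fun t => (F t).continuous)
      F_mul_coe,
    dense_range_apply_of_apply_coe_eq_smul N hmin _ F_mem,
    exists_diag_mem_closure_range_apply_of_apply_coe_eq_smul N hprox _ F_mem⟩

theorem extended_action_continuous_minimal_proximal
    (G : Type u) (X : Type v) [Group G] [TopologicalSpace G] [IsTopologicalGroup G]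
    (N : Subgroup G) [N.Normal] (hNo : IsOpen (N : Set G)) (hNc : IsClosed (N : Set G))
    -- X = Π(N) : the universal minimal proximal flow of N, with jointly continuous N-action
    [TopologicalSpace X] [CompactSpace X] [T2Space X]
    [MulAction N X] [ContinuousSMul N X]
    (hmin : IsMinimalFlow N X) (hprox : IsProximalFlow N X)
    -- the assignment t ↦ σ̂_{t|N} of homeomorphisms of Π(N) to elements of G
    (F : G → X ≃ₜ X)
    -- t ↦ σ̂_{t|N} is a homomorphism
    (F_hom : ∀ s t : G, F (s * t) = (F t).trans (F s))
    -- for r ∈ N, σ̂_{r|N} is the action of r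
    (F_mem : ∀ (r : N) (z : X), F (r : G) z = r • z)
    -- twisted equivariance: σ̂_{t|N}(n • z) = (t n t⁻¹) • σ̂_{t|N}(z)
    (F_tw : ∀ (t : G) (n : N) (z : X),
      F t (n • z) = (⟨t * n * t⁻¹, Subgroup.Normal.conj_mem ‹N.Normal› n n.2 t⟩ : N) • F t z) :
    -- ζ is jointly continuous, and the resulting G-flow is minimal and proximal
    Continuous (fun p : G × X => F p.1 p.2) ∧
    (∀ z : X, Dense (Set.range fun t : G => F t z)) ∧
    (∀ z w : X, ∃ y : X, (y, y) ∈ closure (Set.range fun t : G => (F t z, F t w))) :=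
  extended_action_continuous_minimal_proximal_general G X N hNo hmin hprox F F_hom F_mem
end
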